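/- Let Y = [0,1]², h ∈ C¹ with h_min ≤ h(y₁,η₁) ≤ h_max, h_min > 0, and suppose there is C > 0 with |y₂ h_{η₁}(y₁,η₁)/h(y₁,η₁)| ≤ C on [0,L]×Y, where h_{η₁} = ∂h/∂η₁. For w with ∂w/∂η₁, ∂w/∂y₂ ∈ L²(Y), define (b̄·∇w) = ∂w/∂η₁ − (y₂ h_{η₁}/h) ∂w/∂y₂ and a_{y₁}(w,w) = ∫_Y ( h (b̄·∇w)² + (1/h)(∂w/∂y₂)² ). Then for every λ ∈ ( C² h_max h_min / (1 + C² h_max h_min), 1 ), a_{y₁}(w,w) ≥ h_min(1−λ)‖∂w/∂η₁‖²_{L²(Y)} + ((1 − 1/λ) C² h_min + 1/h_max)‖∂w/∂y₂‖²_{L²(Y)}, and both coefficients are strictly positive. -/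

import Mathlib

/-!
Expanding `h (u - c v)²` and applying Young's inequality to the cross term with the
`h`-dependent parameter `μ = 1 - a / h ∈ [λ, 1)`, where `a = h_min (1 - λ)`, gives exactly
`a u²` at the price of `-(a h / (h - a)) c² v²`. Since `h / (h - a) ≤ 1 / λ` and
`1 / h ≥ 1 / h_max`, the coefficient of `v²` is at least `(1 - 1/λ) C² h_min + 1/h_max`,
which is positive exactly when `λ > C² h_max h_min / (1 + C² h_max h_min)`.
Integrating the pointwise bound over `Y` gives the estimate.
-/

open MeasureTheory

lemma mul_sq_le_mul_sub_sq_add {a h : ℝ} (hah : a < h) (u t : ℝ) :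
    a * u ^ 2 ≤ h * (u - t) ^ 2 + a * h / (h - a) * t ^ 2 := by
  have hd : 0 < h - a := sub_pos.2 hah
  have key : (h - a) * (h * (u - t) ^ 2 + a * h / (h - a) * t ^ 2 - a * u ^ 2)
      = ((h - a) * u - h * t) ^ 2 := by
    field_simp
    ring
  have : 0 ≤ h * (u - t) ^ 2 + a * h / (h - a) * t ^ 2 - a * u ^ 2 :=
    nonneg_of_mul_nonneg_right (key ▸ sq_nonneg _) hd
  linarith

lemma coercivity_pointwise {hmin hmax C lam h c : ℝ} (hhmin : 0 < hmin)
    (hl0 : 0 < lam) (hl1 : lam < 1) (hh1 : hmin ≤ h) (hh2 : h ≤ hmax) (hc : |c| ≤ C)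
    (u v : ℝ) :
    hmin * (1 - lam) * u ^ 2 + ((1 - 1 / lam) * C ^ 2 * hmin + 1 / hmax) * v ^ 2
      ≤ h * (u - c * v) ^ 2 + 1 / h * v ^ 2 := by
  set a := hmin * (1 - lam)
  have hh0 : 0 < h := hhmin.trans_le hh1
  have ha : 0 ≤ a := mul_nonneg hhmin.le (by linarith)
  have hah : a < h := by nlinarith
  have hcC : c ^ 2 ≤ C ^ 2 := sq_le_sq.2 (hc.trans (le_abs_self C))
  have hratio : a * h / (h - a) ≤ a / lam := by
    rw [div_le_div_iff₀ (by linarith) hl0]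
    linarith [mul_nonneg (mul_nonneg ha (sub_nonneg.2 hl1.le)) (sub_nonneg.2 hh1),
      show a * (h - a) - a * h * lam = a * (1 - lam) * (h - hmin) by ring]
  have hcoef : a * h / (h - a) * c ^ 2 + ((1 - 1 / lam) * C ^ 2 * hmin + 1 / hmax) ≤ 1 / h := by
    have hC : a * h / (h - a) * c ^ 2 ≤ a / lam * C ^ 2 :=
      mul_le_mul hratio hcC (sq_nonneg c) (div_nonneg ha hl0.le)
    have hA : a / lam * C ^ 2 + (1 - 1 / lam) * C ^ 2 * hmin = 0 := by
      field_simp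
      ring
    have hH : 1 / hmax ≤ 1 / h := one_div_le_one_div_of_le hh0 hh2
    linarith
  have young := mul_sq_le_mul_sub_sq_add hah u (c * v)
  nlinarith [mul_le_mul_of_nonneg_right hcoef (sq_nonneg v)]

lemma coercivity_coeff_pos {hmin hmax C lam : ℝ} (hhmin : 0 < hmin) (hmax0 : 0 < hmax)
    (hlam : C ^ 2 * hmax * hmin / (1 + C ^ 2 * hmax * hmin) < lam) :
    0 < (1 - 1 / lam) * C ^ 2 * hmin + 1 / hmax := by
  have hd : 0 < 1 + C ^ 2 * hmax * hmin := by positivity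
  have hl0 : 0 < lam := lt_of_le_of_lt (by positivity) hlam
  have hK : 0 < (lam - 1) * C ^ 2 * hmin * hmax + lam := by
    nlinarith [(div_lt_iff₀ hd).1 hlam]
  have he : ((1 - 1 / lam) * C ^ 2 * hmin + 1 / hmax) * (lam * hmax)
      = (lam - 1) * C ^ 2 * hmin * hmax + lam := by
    field_simp
  exact pos_of_mul_pos_left (he ▸ hK) (by positivity)

lemma mul_integral_add_mul_integral_le {α : Type*} [MeasurableSpace α] {μ : Measure α}
    {f g F : α → ℝ} (hf : Integrable f μ) (hg : Integrable g μ) (hF : Integrable F μ)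
    {a b : ℝ} (h : ∀ᵐ x ∂μ, a * f x + b * g x ≤ F x) :
    a * ∫ x, f x ∂μ + b * ∫ x, g x ∂μ ≤ ∫ x, F x ∂μ := by
  rw [← integral_const_mul, ← integral_const_mul,
    ← integral_add (hf.const_mul a) (hg.const_mul b)]
  exact integral_mono_ae ((hf.const_mul a).add (hg.const_mul b)) hF h

theorem stmt12_general (hmin hmax C : ℝ) (hhmin : 0 < hmin)
    (h1 hη : ℝ → ℝ)
    (hbd : ∀ η₁, hmin ≤ h1 η₁ ∧ h1 η₁ ≤ hmax)
    (hCC : ∀ y₂ ∈ Set.Icc (0:ℝ) 1, ∀ η₁ : ℝ, |y₂ * hη η₁ / h1 η₁| ≤ C)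
    (w1 w2 : ℝ × ℝ → ℝ)
    (hw1 : Integrable (fun p => (w1 p) ^ 2)
      (volume.restrict (Set.Icc (0:ℝ) 1 ×ˢ Set.Icc (0:ℝ) 1)))
    (hw2 : Integrable (fun p => (w2 p) ^ 2)
      (volume.restrict (Set.Icc (0:ℝ) 1 ×ˢ Set.Icc (0:ℝ) 1)))
    (ha : Integrable (fun p =>
        h1 p.2 * (w1 p - (p.1 * hη p.2 / h1 p.2) * w2 p) ^ 2
          + (1 / h1 p.2) * (w2 p) ^ 2)
      (volume.restrict (Set.Icc (0:ℝ) 1 ×ˢ Set.Icc (0:ℝ) 1))) :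
    ∀ lam : ℝ, C ^ 2 * hmax * hmin / (1 + C ^ 2 * hmax * hmin) < lam → lam < 1 →
      0 < hmin * (1 - lam) ∧
      0 < (1 - 1 / lam) * C ^ 2 * hmin + 1 / hmax ∧
      hmin * (1 - lam) *
          (∫ p in Set.Icc (0:ℝ) 1 ×ˢ Set.Icc (0:ℝ) 1, (w1 p) ^ 2) +
        ((1 - 1 / lam) * C ^ 2 * hmin + 1 / hmax) *
          (∫ p in Set.Icc (0:ℝ) 1 ×ˢ Set.Icc (0:ℝ) 1, (w2 p) ^ 2) ≤
        ∫ p in Set.Icc (0:ℝ) 1 ×ˢ Set.Icc (0:ℝ) 1,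
          (h1 p.2 * (w1 p - (p.1 * hη p.2 / h1 p.2) * w2 p) ^ 2
            + (1 / h1 p.2) * (w2 p) ^ 2) := by
  intro lam hlam hlam1
  have hmax0 : 0 < hmax := hhmin.trans_le ((hbd 0).1.trans (hbd 0).2)
  have hK := coercivity_coeff_pos hhmin hmax0 hlam
  have hl0 : 0 < lam := lt_of_le_of_lt (by positivity) hlam
  refine ⟨mul_pos hhmin (by linarith), hK, mul_integral_add_mul_integral_le hw1 hw2 ha ?_⟩
  refine ae_restrict_of_forall_mem (measurableSet_Icc.prod measurableSet_Icc) fun p hp => ?_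
  exact coercivity_pointwise hhmin hl0 hlam1 (hbd p.2).1 (hbd p.2).2 (hCC p.1 hp.1 p.2) _ _

/-- uniform coercivity of the homogenized bilinear form
`a_{y₁}(w,w) = ∫_Y ( h (b̄·∇w)² + (1/h)(∂w/∂y₂)² )`, where a point of
`Y = [0,1]²` is `p = (y₂, η₁)`, `w1 = ∂w/∂η₁`, `w2 = ∂w/∂y₂` and
`b̄·∇w = w1 − (y₂ h_{η₁}/h) w2`. For each
`λ ∈ (C² h_max h_min/(1+C² h_max h_min), 1)` both coefficients
`h_min(1−λ)` and `(1−1/λ)C²h_min + 1/h_max` are positive and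
`a_{y₁}(w,w) ≥ h_min(1−λ)‖w1‖² + ((1−1/λ)C²h_min + 1/h_max)‖w2‖²`. -/
theorem stmt12 (hmin hmax C : ℝ) (hhmin : 0 < hmin) (hminmax : hmin ≤ hmax)
    (hC : 0 ≤ C) (h1 hη : ℝ → ℝ) (hm1 : Measurable h1) (hm2 : Measurable hη)
    (hbd : ∀ η₁, hmin ≤ h1 η₁ ∧ h1 η₁ ≤ hmax)
    (hCC : ∀ y₂ ∈ Set.Icc (0:ℝ) 1, ∀ η₁ : ℝ, |y₂ * hη η₁ / h1 η₁| ≤ C)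
    (w1 w2 : ℝ × ℝ → ℝ)
    (hw1 : Integrable (fun p => (w1 p) ^ 2)
      (volume.restrict (Set.Icc (0:ℝ) 1 ×ˢ Set.Icc (0:ℝ) 1)))
    (hw2 : Integrable (fun p => (w2 p) ^ 2)
      (volume.restrict (Set.Icc (0:ℝ) 1 ×ˢ Set.Icc (0:ℝ) 1)))
    (ha : Integrable (fun p =>
        h1 p.2 * (w1 p - (p.1 * hη p.2 / h1 p.2) * w2 p) ^ 2
          + (1 / h1 p.2) * (w2 p) ^ 2)
      (volume.restrict (Set.Icc (0:ℝ) 1 ×ˢ Set.Icc (0:ℝ) 1))) :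
    ∀ lam : ℝ, C ^ 2 * hmax * hmin / (1 + C ^ 2 * hmax * hmin) < lam → lam < 1 →
      0 < hmin * (1 - lam) ∧
      0 < (1 - 1 / lam) * C ^ 2 * hmin + 1 / hmax ∧
      hmin * (1 - lam) *
          (∫ p in Set.Icc (0:ℝ) 1 ×ˢ Set.Icc (0:ℝ) 1, (w1 p) ^ 2) +
        ((1 - 1 / lam) * C ^ 2 * hmin + 1 / hmax) *
          (∫ p in Set.Icc (0:ℝ) 1 ×ˢ Set.Icc (0:ℝ) 1, (w2 p) ^ 2) ≤
        ∫ p in Set.Icc (0:ℝ) 1 ×ˢ Set.Icc (0:ℝ) 1,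
          (h1 p.2 * (w1 p - (p.1 * hη p.2 / h1 p.2) * w2 p) ^ 2
            + (1 / h1 p.2) * (w2 p) ^ 2) :=
  stmt12_general hmin hmax C hhmin h1 hη hbd hCC w1 w2 hw1 hw2 ha
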